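/- arXiv:math/0311482 — 7 statements merged into one kernel-verified Lean document; each statement's English description precedes it below -/
import Mathlib

section
/- Let 𝔤 be a finite-dimensional Lie algebra over ℝ, let m be a positive integer, and let V₁,…,V_m be subspaces of 𝔤 whose internal direct sum is all of 𝔤, with Vₖ := 0 for k > m. Suppose that for every ε > 0 the dilation δ_ε : 𝔤 → 𝔤 (the unique linear map with δ_ε v = ε^i • v for every v ∈ Vᵢ) is a Lie algebra homomorphism, i.e. δ_ε ⁅x, y⁆ = ⁅δ_ε x, δ_ε y⁆ for all x, y ∈ 𝔤. Then ⁅Vᵢ, Vⱼ⁆ ⊆ V_{i+j} for all i, j (in particular ⁅Vᵢ, Vⱼ⁆ = 0 when i + j > m), and consequently 𝔤 is a nilpotent Lie algebra. -/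
/-- If `𝔤` is a finite-dimensional real Lie algebra decomposing as the internal direct sum
of subspaces `V 1, …, V m` (with `V 0 = ⊥` and `V k = ⊥` for `k > m`), and for every `ε > 0`
the dilation `δ_ε` (the linear map acting as `ε ^ i • ·` on `V i`) is a Lie algebra
homomorphism, then `⁅V i, V j⁆ ⊆ V (i + j)` for all `i, j` and `𝔤` is nilpotent. -/
theorem gradedByDilations_nilpotent
    (𝔤 : Type*) [LieRing 𝔤] [LieAlgebra ℝ 𝔤] [FiniteDimensional ℝ 𝔤]
    (m : ℕ) (hm : 0 < m) (V : ℕ → Submodule ℝ 𝔤)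
    (hV0 : V 0 = ⊥) (hVtop : ∀ k, m < k → V k = ⊥)
    (hdirect : DirectSum.IsInternal V)
    (hdil : ∀ ε : ℝ, 0 < ε → ∀ δ : 𝔤 →ₗ[ℝ] 𝔤,
      (∀ i, ∀ v ∈ V i, δ v = ε ^ i • v) →
      ∀ x y : 𝔤, δ ⁅x, y⁆ = ⁅δ x, δ y⁆) :
    (∀ i j, ∀ x ∈ V i, ∀ y ∈ V j, ⁅x, y⁆ ∈ V (i + j)) ∧
      LieRing.IsNilpotent 𝔤 := by
  classical
  set e : (DirectSum ℕ fun i => V i) ≃ₗ[ℝ] 𝔤 :=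
    LinearEquiv.ofBijective (DirectSum.coeLinearMap V) hdirect with he
  have htop : (⨆ i, V i) = ⊤ := hdirect.submodule_iSup_eq_top
  -- the dilation for ε = 2
  set δ : 𝔤 →ₗ[ℝ] 𝔤 :=
    (DirectSum.toModule ℝ ℕ 𝔤 (fun i => (2:ℝ) ^ i • (V i).subtype)) ∘ₗ
      (e.symm : 𝔤 →ₗ[ℝ] DirectSum ℕ fun i => V i) with hδ
  have hδ_apply : ∀ i, ∀ v ∈ V i, δ v = (2:ℝ) ^ i • v := by
    intro i v hv
    have h1 : e.symm v = DirectSum.lof ℝ ℕ (fun i => V i) i ⟨v, hv⟩ := by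
      apply e.injective
      rw [LinearEquiv.apply_symm_apply]
      simp [he, DirectSum.lof_eq_of, DirectSum.coeLinearMap_of]
      exact (DirectSum.coeLinearMap_of V i ⟨v, hv⟩).symm
    simp [hδ, h1, DirectSum.toModule_lof]
  -- δ is a Lie algebra homomorphism
  have hδ_lie : ∀ x y : 𝔤, δ ⁅x, y⁆ = ⁅δ x, δ y⁆ := hdil 2 two_pos δ hδ_apply
  -- components of δ
  have hcomp : ∀ (k : ℕ) (w : 𝔤), e.symm (δ w) k = (2:ℝ) ^ k • (e.symm w k) := by
    intro k w
    have hw : w ∈ ⨆ i, V i := htop ▸ Submodule.mem_top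
    refine Submodule.iSup_induction (motive := fun w => e.symm (δ w) k = (2:ℝ) ^ k • (e.symm w k))
      V hw ?_ ?_ ?_
    · intro j v hv
      rw [hδ_apply j v hv]
      by_cases hjk : j = k
      · subst hjk
        rw [hdirect.ofBijective_coeLinearMap_of_mem (x := (2:ℝ) ^ j • v)
            ((V j).smul_mem _ hv), hdirect.ofBijective_coeLinearMap_of_mem hv]
        ext
        simp
      · rw [hdirect.ofBijective_coeLinearMap_of_mem_ne hjk ((V j).smul_mem _ hv),
          hdirect.ofBijective_coeLinearMap_of_mem_ne hjk hv, smul_zero]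
    · simp
    · intro a b ha hb
      simp only [map_add, DirectSum.add_apply, ha, hb, smul_add]
  -- The grading property
  have hA : ∀ i j, ∀ x ∈ V i, ∀ y ∈ V j, ⁅x, y⁆ ∈ V (i + j) := by
    intro i j x hx y hy
    set z : DirectSum ℕ (fun i => V i) := e.symm ⁅x, y⁆ with hz
    have heig : δ ⁅x, y⁆ = (2:ℝ) ^ (i + j) • ⁅x, y⁆ := by
      rw [hδ_lie, hδ_apply i x hx, hδ_apply j y hy, smul_lie, lie_smul, smul_smul, pow_add]
    have hzk : ∀ k, k ≠ i + j → z k = 0 := by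
      intro k hk
      have h1 : (2:ℝ) ^ k • z k = (2:ℝ) ^ (i + j) • z k := by
        have h0 := hcomp k ⁅x, y⁆
        rw [heig, map_smul, DirectSum.smul_apply, ← hz] at h0
        exact h0.symm
      have h2 : ((2:ℝ) ^ k - (2:ℝ) ^ (i + j)) • z k = 0 := by
        rw [sub_smul, h1, sub_self]
      have h3 : (2:ℝ) ^ k ≠ (2:ℝ) ^ (i + j) := by
        intro hcontra
        apply hk
        have hnat : (2:ℕ) ^ k = (2:ℕ) ^ (i + j) := by exact_mod_cast hcontra
        exact Nat.pow_right_injective (le_refl 2) hnat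
      exact (smul_eq_zero.mp h2).resolve_left (sub_ne_zero.mpr h3)
    have hzof : z = DirectSum.of (fun i => V i) (i + j) (z (i + j)) := by
      refine DFinsupp.ext fun k => ?_
      by_cases hk : k = i + j
      · subst hk; rw [DirectSum.of_eq_same]
      · rw [DirectSum.of_eq_of_ne _ _ _ hk, hzk k hk]
    have : ⁅x, y⁆ = e z := by rw [hz, LinearEquiv.apply_symm_apply]
    rw [this, hzof, he]
    change (DirectSum.coeLinearMap V) _ ∈ _
    rw [DirectSum.coeLinearMap_of]
    exact (z (i + j)).2
  refine ⟨hA, ?_⟩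
  -- Nilpotency
  set W : ℕ → Submodule ℝ 𝔤 := fun k => ⨆ i, V (i + k) with hW
  have hWbot : W (m + 1) = ⊥ := by
    rw [hW]
    simp only [iSup_eq_bot]
    intro i
    exact hVtop _ (by omega)
  have hB : ∀ k (x y : 𝔤), y ∈ W (k + 1) → ⁅x, y⁆ ∈ W (k + 2) := by
    intro k x y hy
    have hx : x ∈ ⨆ i, V i := htop ▸ Submodule.mem_top
    refine Submodule.iSup_induction (motive := fun x => ⁅x, y⁆ ∈ W (k + 2)) V hx ?_ ?_ ?_
    · intro i x hxi
      refine Submodule.iSup_induction (motive := fun y => ⁅x, y⁆ ∈ W (k + 2))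
        (fun j => V (j + (k + 1))) hy ?_ ?_ ?_
      · intro j y hyj
        rcases Nat.eq_zero_or_pos i with hi | hi
        · subst hi
          rw [hV0] at hxi
          simp [(Submodule.mem_bot ℝ).mp hxi]
        · have hb : ⁅x, y⁆ ∈ V (i + (j + (k + 1))) := hA _ _ x hxi y hyj
          have : i + (j + (k + 1)) = (i + j - 1) + (k + 2) := by omega
          rw [this] at hb
          exact Submodule.mem_iSup_of_mem (i + j - 1) hb
      · simp
      · intro a b ha hb
        rw [lie_add]; exact Submodule.add_mem _ ha hb
    · simp
    · intro a b ha hb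
      rw [add_lie]; exact Submodule.add_mem _ ha hb
  have hC : ∀ k, ∀ w, w ∈ LieModule.lowerCentralSeries ℝ 𝔤 𝔤 k → w ∈ W (k + 1) := by
    intro k
    induction k with
    | zero =>
      intro w _
      have hw : w ∈ ⨆ i, V i := htop ▸ Submodule.mem_top
      refine Submodule.iSup_induction (motive := fun w => w ∈ W 1) V hw ?_ ?_ ?_
      · intro i w hwi
        rcases Nat.eq_zero_or_pos i with hi | hi
        · subst hi; rw [hV0] at hwi; simp [(Submodule.mem_bot ℝ).mp hwi]
        · have : i = (i - 1) + 1 := by omega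
          rw [this] at hwi
          exact Submodule.mem_iSup_of_mem (i - 1) hwi
      · simp
      · intro a b ha hb; exact Submodule.add_mem _ ha hb
    | succ k ih =>
      intro w hw
      rw [LieModule.lowerCentralSeries_succ, ← LieSubmodule.mem_toSubmodule,
        LieSubmodule.lieIdeal_oper_eq_linear_span'] at hw
      refine Submodule.span_induction ?_ ?_ ?_ ?_ hw
      · rintro _ ⟨u, -, n, hn, rfl⟩
        exact hB k u n (ih n hn)
      · simp
      · intro a b _ _ ha hb; exact Submodule.add_mem _ ha hb
      · intro c a _ ha; exact Submodule.smul_mem _ c ha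
  have hbot : LieModule.lowerCentralSeries ℝ 𝔤 𝔤 m = ⊥ := by
    rw [eq_bot_iff]
    intro w hw
    have hwm := hC m w hw
    rw [hWbot] at hwm
    simpa using hwm
  exact (LieModule.isNilpotent_iff ℝ 𝔤 𝔤).mpr ⟨m, hbot⟩
end

section
/- Let 𝔤 be a Lie algebra over ℝ with basis (X₀, X₁, X₂), and let a, b, c, d, e be real numbers such that ⁅X₀, X₁⁆ = a•X₁ + b•X₂, ⁅X₀, X₂⁆ = c•X₁ + d•X₂, and ⁅X₁, X₂⁆ = e•X₀. Then e·(a + d) = 0. -/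
/-- In a real Lie algebra with basis `X₀, X₁, X₂` satisfying
`⁅X₀, X₁⁆ = a•X₁ + b•X₂`, `⁅X₀, X₂⁆ = c•X₁ + d•X₂`, `⁅X₁, X₂⁆ = e•X₀`,
the Jacobi identity forces `e * (a + d) = 0`. -/
theorem jacobi_forces_e_mul_trace_eq_zero
    (𝔤 : Type*) [LieRing 𝔤] [LieAlgebra ℝ 𝔤]
    (X : Module.Basis (Fin 3) ℝ 𝔤) (a b c d e : ℝ)
    (h01 : ⁅X 0, X 1⁆ = a • X 1 + b • X 2)
    (h02 : ⁅X 0, X 2⁆ = c • X 1 + d • X 2)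
    (h12 : ⁅X 1, X 2⁆ = e • X 0) :
    e * (a + d) = 0 := by
  have jac : ⁅X 0, ⁅X 1, X 2⁆⁆ = ⁅⁅X 0, X 1⁆, X 2⁆ + ⁅X 1, ⁅X 0, X 2⁆⁆ := by
    rw [leibniz_lie]
  rw [h12, h01, h02, lie_smul, lie_self, smul_zero, add_lie, smul_lie, smul_lie, h12,
      lie_add, lie_smul, lie_smul, lie_self, smul_zero, add_zero, lie_self,
      smul_zero, zero_add, h12, smul_smul, smul_smul] at jac
  have h : (a * e + d * e) • X 0 = (0 : 𝔤) := by
    rw [add_smul]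
    linear_combination (norm := module) -jac
  have := smul_eq_zero.mp h
  rcases this with h' | h'
  · linarith [h']
  · exact absurd h' (X.ne_zero 0)
end

section
/- Let 𝔤 be a Lie algebra over ℝ with basis (X₀, X₁, X₂, X₃), and let a, b, c, e, A, B, C, D be real numbers such that ⁅X₁, X₂⁆ = X₃ + a•X₀, ⁅X₁, X₃⁆ = b•X₀ + A•X₁ + B•X₂, ⁅X₂, X₃⁆ = c•X₀ + C•X₁ + D•X₂, ⁅X₀, X₁⁆ = e•X₂, ⁅X₀, X₂⁆ = −e•X₁, and ⁅X₀, X₃⁆ = 0. Then A + D = 0, e·b = 0 and e·c = 0. -/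
/-- In a real Lie algebra with basis `X₀, X₁, X₂, X₃` satisfying the bracket relations of a
homogeneous contact 3-manifold, the Jacobi identity (applied to `X₁, X₂, X₃`) forces
`A + D = 0`, `e * b = 0` and `e * c = 0`. -/
theorem contact_jacobi_123
    (𝔤 : Type*) [LieRing 𝔤] [LieAlgebra ℝ 𝔤]
    (X : Module.Basis (Fin 4) ℝ 𝔤) (a b c e A B C D : ℝ)
    (h12 : ⁅X 1, X 2⁆ = X 3 + a • X 0)
    (h13 : ⁅X 1, X 3⁆ = b • X 0 + A • X 1 + B • X 2)
    (h23 : ⁅X 2, X 3⁆ = c • X 0 + C • X 1 + D • X 2)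
    (h01 : ⁅X 0, X 1⁆ = e • X 2)
    (h02 : ⁅X 0, X 2⁆ = -e • X 1)
    (h03 : ⁅X 0, X 3⁆ = 0) :
    A + D = 0 ∧ e * b = 0 ∧ e * c = 0 := by
  have h10 : ⁅X 1, X 0⁆ = -(e • X 2) := by rw [← lie_skew, h01]
  have h20 : ⁅X 2, X 0⁆ = -(-e • X 1) := by rw [← lie_skew, h02]
  have h30 : ⁅X 3, X 0⁆ = 0 := by rw [← lie_skew, h03, neg_zero]
  have h21 : ⁅X 2, X 1⁆ = -(X 3 + a • X 0) := by rw [← lie_skew, h12]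
  have h31 : ⁅X 3, X 1⁆ = -(b • X 0 + A • X 1 + B • X 2) := by rw [← lie_skew, h13]
  have hjac := lie_jacobi (X 1) (X 2) (X 3)
  rw [h23, h31, h12] at hjac
  simp only [lie_add, lie_smul, lie_neg, smul_add, smul_smul, h10, h12, h20, h21, h30,
    lie_self] at hjac
  have key := Fintype.linearIndependent_iff.mp X.linearIndependent
    ![(A + D) * a, -(e * b), -(e * c), A + D] (by
    rw [Fin.sum_univ_four]
    simp only [Matrix.cons_val_zero, Matrix.cons_val_one, Matrix.head_cons,
      Matrix.cons_val_two, Matrix.tail_cons, Matrix.cons_val_three]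
    rw [← hjac]
    module)
  have k0 := key 3
  have k1 := key 1
  have k2 := key 2
  simp at k0 k1 k2
  refine ⟨k0, mul_eq_zero.mpr ?_, mul_eq_zero.mpr ?_⟩ <;> tauto
end

section
/- Let 𝔤 be a Lie algebra over ℝ with basis (X₀, X₁, X₂, X₃), and let a, b, c, e, A, B, C, D be real numbers such that ⁅X₁, X₂⁆ = X₃ + a•X₀, ⁅X₁, X₃⁆ = b•X₀ + A•X₁ + B•X₂, ⁅X₂, X₃⁆ = c•X₀ + C•X₁ + D•X₂, ⁅X₀, X₁⁆ = e•X₂, ⁅X₀, X₂⁆ = −e•X₁, and ⁅X₀, X₃⁆ = 0. Then e·b = 0, e·(A − D) = 0 and e·(B + C) = 0. -/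
/-- In a real Lie algebra with basis `X₀, X₁, X₂, X₃` satisfying the bracket relations of a
homogeneous contact 3-manifold, the Jacobi identity (applied to `X₀, X₂, X₃`) forces
`e * b = 0`, `e * (A - D) = 0` and `e * (B + C) = 0`. -/
theorem contact_jacobi_023
    (𝔤 : Type*) [LieRing 𝔤] [LieAlgebra ℝ 𝔤]
    (X : Module.Basis (Fin 4) ℝ 𝔤) (a b c e A B C D : ℝ)
    (h12 : ⁅X 1, X 2⁆ = X 3 + a • X 0)
    (h13 : ⁅X 1, X 3⁆ = b • X 0 + A • X 1 + B • X 2)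
    (h23 : ⁅X 2, X 3⁆ = c • X 0 + C • X 1 + D • X 2)
    (h01 : ⁅X 0, X 1⁆ = e • X 2)
    (h02 : ⁅X 0, X 2⁆ = -e • X 1)
    (h03 : ⁅X 0, X 3⁆ = 0) :
    e * b = 0 ∧ e * (A - D) = 0 ∧ e * (B + C) = 0 := by
  have jac : ⁅⁅X 0, X 2⁆, X 3⁆ = ⁅X 0, ⁅X 2, X 3⁆⁆ - ⁅X 2, ⁅X 0, X 3⁆⁆ := lie_lie _ _ _
  rw [h02, h23, h03] at jac
  simp only [lie_zero, sub_zero, smul_lie, lie_add, lie_smul, lie_self, h13, h01, h02,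
    smul_zero, smul_add, smul_smul] at jac
  have key : (e * b) • X 0 + (e * A - D * e) • X 1 + (e * B + C * e) • X 2 = 0 := by
    rw [sub_smul, add_smul]
    have := sub_eq_zero.mpr jac
    rw [← neg_eq_zero] at this
    rw [← this]
    module
  have hli := Fintype.linearIndependent_iff.mp X.linearIndependent
    ![e * b, e * A - D * e, e * B + C * e, 0]
  have hz : ∀ i, ![e * b, e * A - D * e, e * B + C * e, (0:ℝ)] i = 0 := by
    apply hli
    rw [Fin.sum_univ_four]
    simpa using key
  have h0 := hz 0
  have h1 := hz 1
  have h2 := hz 2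
  simp only [Matrix.cons_val_zero, Matrix.cons_val_one, Matrix.head_cons,
    Matrix.cons_val_two, Matrix.tail_cons] at h0 h1 h2
  refine ⟨h0, ?_, ?_⟩ <;> ring_nf <;> linarith [h0, h1, h2]
end

section
/- Let 𝔤 be a Lie algebra over ℝ with basis (X₀, X₁, X₂, X₃), and let a, b, c, e, A, B, C, D be real numbers such that ⁅X₁, X₂⁆ = X₃ + a•X₀, ⁅X₁, X₃⁆ = b•X₀ + A•X₁ + B•X₂, ⁅X₂, X₃⁆ = c•X₀ + C•X₁ + D•X₂, ⁅X₀, X₁⁆ = e•X₂, ⁅X₀, X₂⁆ = −e•X₁, and ⁅X₀, X₃⁆ = 0. If e ≠ 0, then A = 0, D = 0, b = 0, c = 0 and B + C = 0; in other words, the brackets reduce to ⁅X₁, X₂⁆ = X₃ + a•X₀, ⁅X₁, X₃⁆ = B•X₂, ⁅X₂, X₃⁆ = −B•X₁, ⁅X₀, X₁⁆ = e•X₂, ⁅X₀, X₂⁆ = −e•X₁, ⁅X₀, X₃⁆ = 0. -/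
lemma coeffs_eq_of_basis {𝔤 : Type*} [AddCommGroup 𝔤] [Module ℝ 𝔤]
    (X : Module.Basis (Fin 4) ℝ 𝔤) (p q r s p' q' r' s' : ℝ)
    (h : p • X 0 + q • X 1 + r • X 2 + s • X 3
       = p' • X 0 + q' • X 1 + r' • X 2 + s' • X 3) :
    p = p' ∧ q = q' ∧ r = r' ∧ s = s' := by
  have h' := congrArg X.repr h
  simp only [map_add, map_smul, Module.Basis.repr_self] at h'
  refine ⟨?_, ?_, ?_, ?_⟩
  · have := DFunLike.congr_fun h' 0
    simpa [Finsupp.single_apply] using this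
  · have := DFunLike.congr_fun h' 1
    simpa [Finsupp.single_apply] using this
  · have := DFunLike.congr_fun h' 2
    simpa [Finsupp.single_apply] using this
  · have := DFunLike.congr_fun h' 3
    simpa [Finsupp.single_apply] using this

/-- In a real Lie algebra with basis `X₀, X₁, X₂, X₃` satisfying the bracket relations of a
homogeneous contact 3-manifold, if `e ≠ 0` then `A = 0`, `D = 0`, `b = 0`, `c = 0` and
`B + C = 0`, so the brackets reduce to
`⁅X₁, X₂⁆ = X₃ + a•X₀`, `⁅X₁, X₃⁆ = B•X₂`, `⁅X₂, X₃⁆ = -B•X₁`,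
`⁅X₀, X₁⁆ = e•X₂`, `⁅X₀, X₂⁆ = -e•X₁`, `⁅X₀, X₃⁆ = 0`. -/
theorem contact_e_ne_zero_case
    (𝔤 : Type*) [LieRing 𝔤] [LieAlgebra ℝ 𝔤]
    (X : Module.Basis (Fin 4) ℝ 𝔤) (a b c e A B C D : ℝ)
    (h12 : ⁅X 1, X 2⁆ = X 3 + a • X 0)
    (h13 : ⁅X 1, X 3⁆ = b • X 0 + A • X 1 + B • X 2)
    (h23 : ⁅X 2, X 3⁆ = c • X 0 + C • X 1 + D • X 2)
    (h01 : ⁅X 0, X 1⁆ = e • X 2)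
    (h02 : ⁅X 0, X 2⁆ = -e • X 1)
    (h03 : ⁅X 0, X 3⁆ = 0)
    (he : e ≠ 0) :
    A = 0 ∧ D = 0 ∧ b = 0 ∧ c = 0 ∧ B + C = 0 ∧
      ⁅X 1, X 3⁆ = B • X 2 ∧ ⁅X 2, X 3⁆ = -B • X 1 := by
  -- Jacobi on (0,1,3):  e*c = 0, e*C + B*e = 0, e*D - A*e = 0
  have eq1 : (e*c) • X 0 + (e*C + B*e) • X 1 + (e*D - A*e) • X 2 + (0:ℝ) • X 3
      = (0:ℝ) • X 0 + (0:ℝ) • X 1 + (0:ℝ) • X 2 + (0:ℝ) • X 3 := by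
    have j := leibniz_lie (X 0) (X 1) (X 3)
    rw [h13, h01, h03] at j
    simp only [lie_add, lie_smul, smul_lie, lie_zero, add_zero, h01, h02, h23,
      lie_self, smul_zero] at j
    linear_combination (norm := module) -j
  obtain ⟨hc', hC', hD', -⟩ := coeffs_eq_of_basis X _ _ _ _ _ _ _ _ eq1
  -- Jacobi on (0,2,3):  e*b = 0
  have eq2 : (e*b) • X 0 + (e*A - e*D) • X 1 + (C*e + e*B) • X 2 + (0:ℝ) • X 3
      = (0:ℝ) • X 0 + (0:ℝ) • X 1 + (0:ℝ) • X 2 + (0:ℝ) • X 3 := by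
    have j := leibniz_lie (X 0) (X 2) (X 3)
    rw [h23, h02, h03] at j
    simp only [lie_add, lie_smul, smul_lie, neg_smul, neg_lie, lie_zero, add_zero,
      h01, h02, h13, lie_self, smul_zero] at j
    linear_combination (norm := module) j
  obtain ⟨hb', -, -, -⟩ := coeffs_eq_of_basis X _ _ _ _ _ _ _ _ eq2
  -- Jacobi on (1,2,3):  A + D = 0
  have eq3 : (D*a + A*a) • X 0 + (-(b*e)) • X 1 + (-(c*e)) • X 2 + (D + A) • X 3
      = (0:ℝ) • X 0 + (0:ℝ) • X 1 + (0:ℝ) • X 2 + (0:ℝ) • X 3 := by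
    have j := leibniz_lie (X 1) (X 2) (X 3)
    have h10 : ⁅X 1, X 0⁆ = -(e • X 2) := by rw [← lie_skew, h01]
    have h20 : ⁅X 2, X 0⁆ = -((-e) • X 1) := by rw [← lie_skew, h02]
    have h21 : ⁅X 2, X 1⁆ = -(X 3 + a • X 0) := by rw [← lie_skew, h12]
    rw [h23, h12, h13] at j
    simp only [lie_add, lie_smul, add_lie, smul_lie, lie_self, lie_zero, zero_add,
      add_zero, smul_zero, h03, h10, h20, h21, h12] at j
    linear_combination (norm := module) j
  obtain ⟨-, -, -, hAD⟩ := coeffs_eq_of_basis X _ _ _ _ _ _ _ _ eq3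
  have hc : c = 0 := by
    rcases mul_eq_zero.mp hc' with h | h
    · exact absurd h he
    · exact h
  have hb : b = 0 := by
    rcases mul_eq_zero.mp hb' with h | h
    · exact absurd h he
    · exact h
  have hDA : D = A := by
    have : e * (D - A) = 0 := by ring_nf; linarith [hD']
    rcases mul_eq_zero.mp this with h | h
    · exact absurd h he
    · linarith
  have hA : A = 0 := by linarith
  have hD : D = 0 := by linarith
  have hBC : B + C = 0 := by
    have : e * (C + B) = 0 := by ring_nf; linarith [hC']
    rcases mul_eq_zero.mp this with h | h
    · exact absurd h he
    · linarith
  refine ⟨hA, hD, hb, hc, hBC, ?_, ?_⟩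
  · rw [h13, hb, hA]; simp
  · rw [h23, hc, hD]
    have : C = -B := by linarith
    rw [this]; simp
end

section
/- For all real numbers a, e, B, the alternating bilinear bracket on ℝ⁴ determined on the standard basis (X₀, X₁, X₂, X₃) by ⁅X₁, X₂⁆ = X₃ + a•X₀, ⁅X₁, X₃⁆ = B•X₂, ⁅X₂, X₃⁆ = −B•X₁, ⁅X₀, X₁⁆ = e•X₂, ⁅X₀, X₂⁆ = −e•X₁, ⁅X₀, X₃⁆ = 0 satisfies the Jacobi identity, and hence defines a Lie algebra structure on ℝ⁴. -/
/-! The bracket is `⁅x, y⁆ = ∑_{i<j} (x_i y_j - x_j y_i) ⁅X_i, X_j⁆`, a sum of the coordinates of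
`x ∧ y` against the prescribed structure constants, so it is bilinear, alternating and takes the
required values on basis pairs by construction. The Jacobi identity is then a polynomial identity
in the coordinates of `x, y, z`, valid over any commutative ring. -/

section WedgeCoord

variable {R ι : Type*} [CommRing R]

def wedgeCoord (i j : ι) : (ι → R) →ₗ[R] (ι → R) →ₗ[R] R :=
  LinearMap.mk₂ R (fun x y => x i * y j - x j * y i)
    (fun _ _ _ => by simp only [Pi.add_apply]; ring)
    (fun _ _ _ => by simp only [Pi.smul_apply, smul_eq_mul]; ring)
    (fun _ _ _ => by simp only [Pi.add_apply]; ring)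
    (fun _ _ _ => by simp only [Pi.smul_apply, smul_eq_mul]; ring)

@[simp]
theorem wedgeCoord_apply (i j : ι) (x y : ι → R) :
    wedgeCoord i j x y = x i * y j - x j * y i := rfl

theorem wedgeCoord_self (i j : ι) (x : ι → R) : wedgeCoord i j x x = 0 := by
  simp [mul_comm]

end WedgeCoord

section ContactBracket

variable {R : Type*} [CommRing R] (a e B : R)

open LinearMap in
def contactBracket : (Fin 4 → R) →ₗ[R] (Fin 4 → R) →ₗ[R] (Fin 4 → R) :=
  (wedgeCoord 1 2).compr₂ (toSpanSingleton R _ (Pi.single 3 1 + a • Pi.single 0 1)) +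
  (wedgeCoord 1 3).compr₂ (toSpanSingleton R _ (B • Pi.single 2 1)) +
  (wedgeCoord 2 3).compr₂ (toSpanSingleton R _ (-B • Pi.single 1 1)) +
  (wedgeCoord 0 1).compr₂ (toSpanSingleton R _ (e • Pi.single 2 1)) +
  (wedgeCoord 0 2).compr₂ (toSpanSingleton R _ (-e • Pi.single 1 1))

theorem contactBracket_self (x : Fin 4 → R) : contactBracket a e B x x = 0 := by
  simp only [contactBracket, LinearMap.add_apply, LinearMap.compr₂_apply, wedgeCoord_self,
    map_zero, add_zero]

theorem contactBracket_jacobi (x y z : Fin 4 → R) :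
    contactBracket a e B x (contactBracket a e B y z) +
      contactBracket a e B y (contactBracket a e B z x) +
      contactBracket a e B z (contactBracket a e B x y) = 0 := by
  funext k
  fin_cases k <;> simp [contactBracket] <;> ring

end ContactBracket

/-- For all real `a`, `e`, `B`, the alternating bilinear bracket on `ℝ⁴` determined on the
standard basis `X₀, X₁, X₂, X₃` by `⁅X₁, X₂⁆ = X₃ + a•X₀`, `⁅X₁, X₃⁆ = B•X₂`,
`⁅X₂, X₃⁆ = -B•X₁`, `⁅X₀, X₁⁆ = e•X₂`, `⁅X₀, X₂⁆ = -e•X₁`, `⁅X₀, X₃⁆ = 0`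
satisfies the Jacobi identity, and hence defines a Lie algebra structure on `ℝ⁴`. -/
theorem homogeneousContact_bracket_jacobi (a e B : ℝ) :
    ∃ Br : (Fin 4 → ℝ) →ₗ[ℝ] (Fin 4 → ℝ) →ₗ[ℝ] (Fin 4 → ℝ),
      (∀ x, Br x x = 0) ∧
      Br (Pi.single 1 1) (Pi.single 2 1) =
        (Pi.single 3 1 : Fin 4 → ℝ) + a • (Pi.single 0 1 : Fin 4 → ℝ) ∧
      Br (Pi.single 1 1) (Pi.single 3 1) = B • (Pi.single 2 1 : Fin 4 → ℝ) ∧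
      Br (Pi.single 2 1) (Pi.single 3 1) = -B • (Pi.single 1 1 : Fin 4 → ℝ) ∧
      Br (Pi.single 0 1) (Pi.single 1 1) = e • (Pi.single 2 1 : Fin 4 → ℝ) ∧
      Br (Pi.single 0 1) (Pi.single 2 1) = -e • (Pi.single 1 1 : Fin 4 → ℝ) ∧
      Br (Pi.single 0 1) (Pi.single 3 1) = 0 ∧
      ∀ x y z : Fin 4 → ℝ, Br x (Br y z) + Br y (Br z x) + Br z (Br x y) = 0 := by
  refine ⟨contactBracket a e B, contactBracket_self a e B, ?_, ?_, ?_, ?_, ?_, ?_,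
    contactBracket_jacobi a e B⟩ <;>
  simp [contactBracket]
end

section
/- For all real numbers A, B, C, the alternating bilinear bracket on ℝ³ determined on the standard basis (X₁, X₂, X₃) by ⁅X₁, X₂⁆ = X₃, ⁅X₁, X₃⁆ = A•X₁ + B•X₂, ⁅X₂, X₃⁆ = C•X₁ − A•X₂ satisfies the Jacobi identity, and hence defines a Lie algebra structure on ℝ³. (This gives the 3-dimensional family of 3-dimensional Lie groups carrying homogeneous contact structures, including SO(3), SL(2,ℝ) and E(1,1).) -/
/-!
Write `⁅x, y⁆ = N (x × y)`. Since `X₁ × X₂ = X₃`, `X₃ × X₁ = X₂`, `X₂ × X₃ = X₁`, the prescribed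
brackets say that `N` has columns `(C, -A, 0)`, `(-A, -B, 0)`, `(0, 0, 1)`; this `N` is symmetric.
For every symmetric `N` the bracket `N (x × y)` satisfies the Jacobi identity (these are the
unimodular, Bianchi class A, Lie algebras): the Jacobiator is `N` applied to the alternating
trilinear map `Σ_cyc x × N (y × z)`, whose value on `(X₁, X₂, X₃)` is `Σ_k X_k × N X_k`, and this
vanishes exactly when `N` is symmetric.
-/

open Matrix

variable {R : Type*} [CommRing R]

def crossBracket (N : Matrix (Fin 3) (Fin 3) R) :
    (Fin 3 → R) →ₗ[R] (Fin 3 → R) →ₗ[R] (Fin 3 → R) :=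
  crossProduct.compr₂ N.mulVecLin

theorem crossBracket_apply (N : Matrix (Fin 3) (Fin 3) R) (x y : Fin 3 → R) :
    crossBracket N x y = N *ᵥ (x ⨯₃ y) :=
  rfl

theorem crossBracket_self (N : Matrix (Fin 3) (Fin 3) R) (x : Fin 3 → R) :
    crossBracket N x x = 0 := by
  rw [crossBracket_apply, cross_self, mulVec_zero]

theorem cross_mulVec_cross_cyclic_sum {N : Matrix (Fin 3) (Fin 3) R} (hN : N.IsSymm)
    (x y z : Fin 3 → R) :
    x ⨯₃ (N *ᵥ (y ⨯₃ z)) + y ⨯₃ (N *ᵥ (z ⨯₃ x)) + z ⨯₃ (N *ᵥ (x ⨯₃ y)) = 0 := by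
  have h10 := hN.apply 0 1
  have h20 := hN.apply 0 2
  have h21 := hN.apply 1 2
  ext i
  fin_cases i <;>
    simp [cross_apply, mulVec, dotProduct, Fin.sum_univ_three, h10, h20, h21] <;> ring

theorem crossBracket_jacobi {N : Matrix (Fin 3) (Fin 3) R} (hN : N.IsSymm) (x y z : Fin 3 → R) :
    crossBracket N x (crossBracket N y z) + crossBracket N y (crossBracket N z x) +
      crossBracket N z (crossBracket N x y) = 0 := by
  simp only [crossBracket_apply, ← mulVec_add, cross_mulVec_cross_cyclic_sum hN, mulVec_zero]

/-- For all real `A`, `B`, `C`, the alternating bilinear bracket on `ℝ³` determined on the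
standard basis `X₁, X₂, X₃` by `⁅X₁, X₂⁆ = X₃`, `⁅X₁, X₃⁆ = A•X₁ + B•X₂`,
`⁅X₂, X₃⁆ = C•X₁ - A•X₂` satisfies the Jacobi identity, and hence defines a Lie algebra
structure on `ℝ³`. -/
theorem contactGroup_bracket_jacobi (A B C : ℝ) :
    ∃ Br : (Fin 3 → ℝ) →ₗ[ℝ] (Fin 3 → ℝ) →ₗ[ℝ] (Fin 3 → ℝ),
      (∀ x, Br x x = 0) ∧
      Br (Pi.single 0 1) (Pi.single 1 1) = (Pi.single 2 1 : Fin 3 → ℝ) ∧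
      Br (Pi.single 0 1) (Pi.single 2 1) =
        A • (Pi.single 0 1 : Fin 3 → ℝ) + B • (Pi.single 1 1 : Fin 3 → ℝ) ∧
      Br (Pi.single 1 1) (Pi.single 2 1) =
        C • (Pi.single 0 1 : Fin 3 → ℝ) - A • (Pi.single 1 1 : Fin 3 → ℝ) ∧
      ∀ x y z : Fin 3 → ℝ, Br x (Br y z) + Br y (Br z x) + Br z (Br x y) = 0 := by
  set N : Matrix (Fin 3) (Fin 3) ℝ := !![C, -A, 0; -A, -B, 0; 0, 0, 1]
  have hN : N.IsSymm := by
    ext i j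
    fin_cases i <;> fin_cases j <;> rfl
  refine ⟨crossBracket N, crossBracket_self N, ?_, ?_, ?_, crossBracket_jacobi hN⟩ <;>
    ext i <;> fin_cases i <;>
    simp [N, crossBracket_apply, cross_apply, mulVec, dotProduct, Fin.sum_univ_three]
end
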